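/- For all nonempty words ξ, ζ over 𝒜: if some element of ͞ζ is derivable from P_T ∪ ͞ξ (by modus ponens and substitution), then ξ ⟾_T ζ, i.e., the tag system T produces ζ from ξ. -/
import Mathlib


namespace PC

/-- `{→}`-formulas over a countably infinite set of propositional variables. -/
inductive Fml : Type where
  | var : ℕ → Fml
  | imp : Fml → Fml → Fml
deriving DecidableEq

namespace Fml

/-- Application of a substitution to a formula. -/
def subst (σ : ℕ → Fml) : Fml → Fml
  | var n => σ n
  | imp A B => imp (subst σ A) (subst σ B)

/-- The set of variables of a formula. -/
def fvars : Fml → Finset ℕ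
  | var n => {n}
  | imp A B => fvars A ∪ fvars B

/-- Derivability from a set of axioms by modus ponens and substitution. -/
inductive Deriv (P : Set Fml) : Fml → Prop
  | ax {A : Fml} : A ∈ P → Deriv P A
  | mp {A B : Fml} : Deriv P A → Deriv P (imp A B) → Deriv P B
  | sub {A : Fml} (σ : ℕ → Fml) : Deriv P A → Deriv P (subst σ A)

end Fml

/-- `B̂`: the result of substituting `B` for the variable `x` (= `var 0`) in `x̂`. -/
def hat (xhat B : Fml) : Fml := Fml.subst (fun n => if n = 0 then B else Fml.var n) xhat

/-- `A ∘ B := ((B̂ → B̂) → B̂) → (Â → ((B̂ → B̂) → B̂))`. -/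
def circ (xhat A B : Fml) : Fml :=
  .imp (.imp (.imp (hat xhat B) (hat xhat B)) (hat xhat B))
    (.imp (hat xhat A) (.imp (.imp (hat xhat B) (hat xhat B)) (hat xhat B)))

/-- `A · B := ((A → A) → A) ∘ B`. -/
def dot (xhat A B : Fml) : Fml := circ xhat (.imp (.imp A A) A) B

/-- `Cform i` is the formula `p → (p → … (p → p))` with `i` antecedents `p`,
where `p := var 0`. -/
def Cform : ℕ → Fml
  | 0 => .var 0
  | n + 1 => .imp (.var 0) (Cform n)

/-- The code of the letter `aᵢ` (letters of the alphabet `𝒜 = {a₁, …, a_m}` are the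
elements of `Fin m`, the letter `a : Fin m` standing for `a_{a+1}`): `Cᵢ ∘ p`. -/
def letterCode (xhat : Fml) {m : ℕ} (a : Fin m) : Fml :=
  circ xhat (Cform (a.val + 1)) (.var 0)

/-- Formal alphabetic-formula trees over the alphabet `Fin m`. -/
inductive ATree (m : ℕ) : Type where
  | leaf : Fin m → ATree m
  | node : ATree m → ATree m → ATree m

/-- The word associated with an alphabetic formula. -/
def ATree.word {m : ℕ} : ATree m → List (Fin m)
  | .leaf a => [a]
  | .node l r => l.word ++ r.word

/-- The `{→}`-formula denoted by an alphabetic-formula tree. -/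
def ATree.toFml {m : ℕ} (xhat : Fml) : ATree m → Fml
  | .leaf a => letterCode xhat a
  | .node l r => dot xhat (l.toFml xhat) (r.toFml xhat)

/-- `A` is an alphabetic formula (an `𝒜`-formula). -/
def IsAForm (m : ℕ) (xhat : Fml) (A : Fml) : Prop := ∃ t : ATree m, t.toFml xhat = A

/-- The code `͞α` of a word `α`: the set of all `𝒜`-formulas `A` with `word(A) = α`. -/
def codeSet {m : ℕ} (xhat : Fml) (α : List (Fin m)) : Set Fml :=
  { A | ∃ t : ATree m, t.word = α ∧ t.toFml xhat = A }

/-- `A*`: the set of substitution instances of `A`. -/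
def Inst (A : Fml) : Set Fml := { B | ∃ σ, Fml.subst σ A = B }

/-- `M*`: the set of substitution instances of members of `M`. -/
def InstSet (M : Set Fml) : Set Fml := { B | ∃ A ∈ M, ∃ σ, Fml.subst σ A = B }

/-- A tag system over the alphabet `Fin m`: the words `ω₁, …, ω_m` and the
deletion number `d`. -/
structure TagSystem (m : ℕ) where
  W : Fin m → List (Fin m)
  d : ℕ

/-- One-step production: `ξ ↦_T ζ` iff `ξ = aᵢβγ` with `|β| = d − 1` and `ζ = γωᵢ`. -/
def TagStep {m : ℕ} (T : TagSystem m) (ξ ζ : List (Fin m)) : Prop :=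
  ∃ (i : Fin m) (β γ : List (Fin m)),
    β.length = T.d - 1 ∧ ξ = i :: (β ++ γ) ∧ ζ = γ ++ T.W i

/-- `ξ ⟾_T ζ`: reflexive-transitive closure of one-step production. -/
def TagProd {m : ℕ} (T : TagSystem m) : List (Fin m) → List (Fin m) → Prop :=
  Relation.ReflTransGen (TagStep T)

/-- `T` halts on `ξ`. -/
def TagHalts {m : ℕ} (T : TagSystem m) (ξ : List (Fin m)) : Prop :=
  ∃ ζ, TagProd T ξ ζ ∧ ζ.length < T.d

/-- The variables `x, y, z, u` used in the axiom schemes. -/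
def Xv : Fml := .var 1
def Yv : Fml := .var 2
def Zv : Fml := .var 3
def Uv : Fml := .var 4

/-- The axioms (R₁)–(R₄). -/
def Raxioms (xhat : Fml) : Set Fml :=
  { .imp (dot xhat Xv (dot xhat Yv Zv)) (dot xhat (dot xhat Xv Yv) Zv),
    .imp (dot xhat (dot xhat Xv Yv) Zv) (dot xhat Xv (dot xhat Yv Zv)),
    .imp (dot xhat (dot xhat Xv (dot xhat Yv Zv)) Uv)
      (dot xhat (dot xhat (dot xhat Xv Yv) Zv) Uv),
    .imp (dot xhat (dot xhat (dot xhat Xv Yv) Zv) Uv)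
      (dot xhat (dot xhat Xv (dot xhat Yv Zv)) Uv) }

/-- The axioms (T₁) and (T₂) of `P_T`. -/
def Taxioms {m : ℕ} (xhat : Fml) (T : TagSystem m) : Set Fml :=
  { F | ∃ (i : Fin m) (α : List (Fin m)) (A B : Fml),
      α.length = T.d - 1 ∧ A ∈ codeSet xhat (i :: α) ∧ B ∈ codeSet xhat (T.W i) ∧
      (F = .imp (dot xhat A Xv) (dot xhat Xv B) ∨ F = .imp A B) }

/-- The calculus `P_T`. -/
def PT {m : ℕ} (xhat : Fml) (T : TagSystem m) : Set Fml := Taxioms xhat T ∪ Raxioms xhat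

/-- `P ⊢ A ⇒ B`: there are `C₀ = A, …, C_n = B` with `P ⊢ Cᵢ → Cᵢ₊₁` for all `i`. -/
def DChain (P : Set Fml) : Fml → Fml → Prop :=
  Relation.ReflTransGen (fun C D => Fml.Deriv P (.imp C D))

/-- `T_α`: the set of `𝒜`-formulas `A` with `α ⟾_T word(A)`. -/
def Tset {m : ℕ} (xhat : Fml) (T : TagSystem m) (α : List (Fin m)) : Set Fml :=
  { A | ∃ t : ATree m, t.toFml xhat = A ∧ TagProd T α t.word }

/-- The halting-condition axioms (H) for the calculus `P₀`. -/
def Haxioms {m : ℕ} (xhat : Fml) (T : TagSystem m) (P₀ : Finset Fml) : Set Fml :=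
  { F | ∃ (α : List (Fin m)) (A B : Fml), α ≠ [] ∧ α.length < T.d ∧
      A ∈ codeSet xhat α ∧ B ∈ P₀ ∧ F = .imp A B }

/-- The calculus `P_{T,P₀}`. -/
def PTP0 {m : ℕ} (xhat : Fml) (T : TagSystem m) (P₀ : Finset Fml) : Set Fml :=
  PT xhat T ∪ Haxioms xhat T P₀

/-- The calculus `P_{T,P₀,ξ}`. -/
def PTP0xi {m : ℕ} (xhat : Fml) (T : TagSystem m) (P₀ : Finset Fml)
    (ξ : List (Fin m)) : Set Fml :=
  PT xhat T ∪ Haxioms xhat T P₀ ∪ codeSet xhat ξ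

/-- `⟨P⟩`: formulas obtained from `P` by one application of modus ponens or
substitution. -/
def stepOnce (P : Set Fml) : Set Fml :=
  { B | ∃ A, A ∈ P ∧ Fml.imp A B ∈ P } ∪ { B | ∃ A ∈ P, ∃ σ, Fml.subst σ A = B }

/-- `⟨P⟩_n`. -/
def stepIter (P : Set Fml) : ℕ → Set Fml
  | 0 => P
  | n + 1 => stepOnce (stepIter P n)

/-- The single axiom `x → (y → x)`. -/
def Kax : Fml := .imp (.var 0) (.imp (.var 1) (.var 0))

/-- An effective encoding of `{→}`-formulas as natural numbers. -/
def encFml : Fml → ℕ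
  | .var n => Nat.pair 0 n
  | .imp A B => Nat.pair 1 (Nat.pair (encFml A) (encFml B))

/-- The fixed effective encoding of `{→}`-calculi (finite sets of formulas)
as natural numbers. -/
def encCalc (P : Finset Fml) : ℕ :=
  Encodable.encode ((P.image encFml).sort (· ≤ ·))



section Soundness

open Fml

/-- Size of a formula. -/
private def sz : Fml → ℕ
  | .var _ => 1
  | .imp A B => sz A + sz B + 1

private lemma sz_pos (A : Fml) : 0 < sz A := by
  cases A <;> simp [sz]

private lemma subst_subst (σ τ : ℕ → Fml) (A : Fml) :
    Fml.subst σ (Fml.subst τ A) = Fml.subst (fun n => Fml.subst σ (τ n)) A := by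
  induction A with
  | var n => rfl
  | imp A B ihA ihB => simp [Fml.subst, ihA, ihB]

private lemma subst_congr {σ σ' : ℕ → Fml} :
    ∀ {A : Fml}, (∀ n ∈ A.fvars, σ n = σ' n) → Fml.subst σ A = Fml.subst σ' A := by
  intro A
  induction A with
  | var n => exact fun h => h n (by simp [Fml.fvars])
  | imp A B ihA ihB =>
      intro h
      simp only [Fml.subst, Fml.imp.injEq]
      exact ⟨ihA fun n hn => h n (by simp [Fml.fvars, hn]),
             ihB fun n hn => h n (by simp [Fml.fvars, hn])⟩

private lemma subst_var_id (A : Fml) : Fml.subst Fml.var A = A := by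
  induction A <;> simp [Fml.subst, *]

private lemma subst_fvar_eq {σ σ' : ℕ → Fml} :
    ∀ {A : Fml}, Fml.subst σ A = Fml.subst σ' A → ∀ n ∈ A.fvars, σ n = σ' n := by
  intro A
  induction A with
  | var k =>
      intro h n hn
      simp [Fml.fvars] at hn
      subst hn; exact h
  | imp A B ihA ihB =>
      intro h n hn
      simp only [Fml.subst, Fml.imp.injEq] at h
      simp [Fml.fvars] at hn
      rcases hn with hn | hn
      · exact ihA h.1 n hn
      · exact ihB h.2 n hn

private lemma fvars_subst_subset {σ : ℕ → Fml} {s : Finset ℕ} :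
    ∀ {A : Fml}, (∀ n ∈ A.fvars, (σ n).fvars ⊆ s) → (Fml.subst σ A).fvars ⊆ s := by
  intro A
  induction A with
  | var n => exact fun h => h n (by simp [Fml.fvars])
  | imp A B ihA ihB =>
      intro h
      simp only [Fml.subst, Fml.fvars]
      exact Finset.union_subset (ihA fun n hn => h n (by simp [Fml.fvars, hn]))
        (ihB fun n hn => h n (by simp [Fml.fvars, hn]))

variable {xhat : Fml}

private lemma subst_hat (hx : xhat.fvars = {0}) (σ : ℕ → Fml) (B : Fml) :
    Fml.subst σ (hat xhat B) = hat xhat (Fml.subst σ B) := by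
  unfold hat
  rw [subst_subst]
  apply subst_congr
  intro n hn
  rw [hx] at hn
  simp at hn
  subst hn
  simp [Fml.subst]

private lemma hat_inj (hx : xhat.fvars = {0}) {B B' : Fml}
    (h : hat xhat B = hat xhat B') : B = B' := by
  have := subst_fvar_eq h 0 (by rw [hx]; simp)
  simpa using this

private lemma dot_eq_circ (A B : Fml) :
    dot xhat A B = circ xhat (.imp (.imp A A) A) B := rfl

private lemma circ_decomp {A B P Q : Fml} (h : circ xhat A B = .imp P Q) :
    P = .imp (.imp (hat xhat B) (hat xhat B)) (hat xhat B) := by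
  unfold circ at h
  injection h with h1 h2
  exact h1.symm

private lemma circ_inj (hx : xhat.fvars = {0}) {A B A' B' : Fml}
    (h : circ xhat A B = circ xhat A' B') : A = A' ∧ B = B' := by
  unfold circ at h
  injection h with h1 h2
  injection h1 with h3 h4
  injection h2 with h5 h6
  exact ⟨hat_inj hx h5, hat_inj hx h4⟩

private lemma circ_ne_dupl (A B C : Fml) : circ xhat A B ≠ .imp (.imp C C) C := by
  intro h
  have h1 := circ_decomp h
  injection h1 with h2 h3
  rw [← h3] at h2
  have := congrArg sz h2
  simp [sz] at this
  omega

private lemma circ_ne_selfimp (A B C : Fml) : circ xhat A B ≠ .imp C C := by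
  intro h
  unfold circ at h
  injection h with h1 h2
  rw [h1] at h2
  have := congrArg sz h2
  simp [sz] at this
  omega

private lemma subst_circ (hx : xhat.fvars = {0}) (τ : ℕ → Fml) (A B : Fml) :
    Fml.subst τ (circ xhat A B) = circ xhat (Fml.subst τ A) (Fml.subst τ B) := by
  simp only [circ, Fml.subst, subst_hat hx]

private lemma subst_dot (hx : xhat.fvars = {0}) (τ : ℕ → Fml) (A B : Fml) :
    Fml.subst τ (dot xhat A B) = dot xhat (Fml.subst τ A) (Fml.subst τ B) := by
  rw [dot_eq_circ, subst_circ hx, dot_eq_circ]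
  rfl

private lemma imp_dot_shape (hx : xhat.fvars = {0}) (τ : ℕ → Fml) (P Q D : Fml) :
    ∃ U V D', Fml.subst τ (.imp (dot xhat P Q) D) = .imp (circ xhat U V) D' :=
  ⟨.imp (.imp (Fml.subst τ P) (Fml.subst τ P)) (Fml.subst τ P), Fml.subst τ Q,
    Fml.subst τ D, by
      show Fml.imp (Fml.subst τ (dot xhat P Q)) (Fml.subst τ D) = _
      rw [subst_dot hx, dot_eq_circ]⟩

private lemma dot_inj (hx : xhat.fvars = {0}) {A B A' B' : Fml}
    (h : dot xhat A B = dot xhat A' B') : A = A' ∧ B = B' := by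
  rw [dot_eq_circ, dot_eq_circ] at h
  obtain ⟨h1, h2⟩ := circ_inj hx h
  injection h1 with h3 h4
  exact ⟨h4, h2⟩

private lemma subst_cform_zero (τ : ℕ → Fml) : Fml.subst τ (Cform 0) = τ 0 := rfl

private lemma subst_cform_succ (τ : ℕ → Fml) (n : ℕ) :
    Fml.subst τ (Cform (n + 1)) = .imp (τ 0) (Fml.subst τ (Cform n)) := rfl

private lemma cform_ne_dupl (n : ℕ) (τ : ℕ → Fml) (L : Fml) :
    Fml.subst τ (Cform (n + 1)) ≠ .imp (.imp L L) L := by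
  intro h
  rw [subst_cform_succ] at h
  injection h with h1 h2
  cases n with
  | zero =>
      rw [subst_cform_zero] at h2
      rw [h2] at h1
      have := congrArg sz h1
      simp [sz] at this
      omega
  | succ k =>
      rw [subst_cform_succ] at h2
      have e1 := congrArg sz h1
      have e2 := congrArg sz h2
      have e3 := sz_pos (Fml.subst τ (Cform k))
      simp [sz] at e1 e2
      omega

private lemma cform_len_inj :
    ∀ (n n' : ℕ) (τ τ' : ℕ → Fml), τ 0 = τ' 0 →
      Fml.subst τ (Cform n) = Fml.subst τ' (Cform n') → n = n' := by
  intro n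
  induction n with
  | zero =>
      intro n' τ τ' h0 h
      cases n' with
      | zero => rfl
      | succ k =>
          rw [subst_cform_zero, subst_cform_succ, ← h0] at h
          have := congrArg sz h
          have e3 := sz_pos (Fml.subst τ' (Cform k))
          simp [sz] at this
          omega
  | succ k ih =>
      intro n' τ τ' h0 h
      cases n' with
      | zero =>
          rw [subst_cform_zero, subst_cform_succ, h0] at h
          have := congrArg sz h
          have e3 := sz_pos (Fml.subst τ (Cform k))
          simp [sz] at this
          omega
      | succ j =>
          rw [subst_cform_succ, subst_cform_succ] at h
          injection h with h1 h2
          rw [ih j τ τ' h0 h2]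

private lemma subst_toFml_leaf (hx : xhat.fvars = {0}) {m : ℕ} (τ : ℕ → Fml) (a : Fin m) :
    Fml.subst τ ((ATree.leaf a).toFml xhat)
      = circ xhat (Fml.subst τ (Cform (a.val + 1))) (τ 0) := by
  rw [show (ATree.leaf a).toFml xhat = circ xhat (Cform (a.val + 1)) (.var 0) from rfl,
    subst_circ hx]
  rfl

private lemma subst_toFml_node (hx : xhat.fvars = {0}) {m : ℕ} (τ : ℕ → Fml)
    (l r : ATree m) :
    Fml.subst τ ((ATree.node l r).toFml xhat)
      = dot xhat (Fml.subst τ (l.toFml xhat)) (Fml.subst τ (r.toFml xhat)) := by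
  rw [show (ATree.node l r).toFml xhat = dot xhat (l.toFml xhat) (r.toFml xhat) from rfl,
    subst_dot hx]

private lemma toFml_is_circ (hx : xhat.fvars = {0}) {m : ℕ} (t : ATree m) (τ : ℕ → Fml) :
    ∃ U V, Fml.subst τ (t.toFml xhat) = circ xhat U V := by
  cases t with
  | leaf a => exact ⟨_, _, subst_toFml_leaf hx τ a⟩
  | node l r => exact ⟨_, _, by rw [subst_toFml_node hx, dot_eq_circ]⟩

private lemma word_det (hx : xhat.fvars = {0}) {m : ℕ} :
    ∀ (t t' : ATree m) (σ σ' : ℕ → Fml),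
      Fml.subst σ (t.toFml xhat) = Fml.subst σ' (t'.toFml xhat) →
      t.word = t'.word ∧ σ 0 = σ' 0 := by
  intro t
  induction t with
  | leaf a =>
      intro t' σ σ' h
      cases t' with
      | leaf a' =>
          rw [subst_toFml_leaf hx, subst_toFml_leaf hx] at h
          obtain ⟨h1, h2⟩ := circ_inj hx h
          have hval := cform_len_inj _ _ _ _ h2 h1
          have : a = a' := Fin.ext (by omega)
          exact ⟨by simp [ATree.word, this], h2⟩
      | node l' r' =>
          rw [subst_toFml_leaf hx, subst_toFml_node hx, dot_eq_circ] at h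
          obtain ⟨h1, h2⟩ := circ_inj hx h
          exact absurd h1 (cform_ne_dupl _ _ _)
  | node l r ihl ihr =>
      intro t' σ σ' h
      cases t' with
      | leaf a' =>
          rw [subst_toFml_node hx, subst_toFml_leaf hx, dot_eq_circ] at h
          obtain ⟨h1, h2⟩ := circ_inj hx h
          exact absurd h1.symm (cform_ne_dupl _ _ _)
      | node l' r' =>
          rw [subst_toFml_node hx, subst_toFml_node hx] at h
          obtain ⟨h1, h2⟩ := dot_inj hx h
          obtain ⟨wl, p⟩ := ihl l' σ σ' h1
          obtain ⟨wr, _⟩ := ihr r' σ σ' h2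
          exact ⟨by simp [ATree.word, wl, wr], p⟩

private lemma dot_decomp (hx : xhat.fvars = {0}) {m : ℕ} (t : ATree m) (σ : ℕ → Fml)
    (U V : Fml) (h : Fml.subst σ (t.toFml xhat) = dot xhat U V) :
    ∃ l r : ATree m, t = .node l r ∧ Fml.subst σ (l.toFml xhat) = U ∧
      Fml.subst σ (r.toFml xhat) = V := by
  cases t with
  | leaf a =>
      rw [subst_toFml_leaf hx, dot_eq_circ] at h
      obtain ⟨h1, _⟩ := circ_inj hx h
      exact absurd h1 (cform_ne_dupl _ _ _)
  | node l r =>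
      rw [subst_toFml_node hx] at h
      obtain ⟨h1, h2⟩ := dot_inj hx h
      exact ⟨l, r, rfl, h1, h2⟩

private lemma fvars_hat_subset (hx : xhat.fvars = {0}) (B : Fml) :
    (hat xhat B).fvars ⊆ B.fvars := by
  unfold hat
  apply fvars_subst_subset
  intro n hn
  rw [hx] at hn
  simp at hn
  subst hn
  simp

private lemma fvars_cform (n : ℕ) : (Cform n).fvars ⊆ {0} := by
  induction n with
  | zero => simp [Cform, Fml.fvars]
  | succ k ih =>
      rw [show Cform (k + 1) = .imp (.var 0) (Cform k) from rfl]
      simp only [Fml.fvars]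
      exact Finset.union_subset (by simp [Fml.fvars]) ih

private lemma fvars_circ_subset (hx : xhat.fvars = {0}) {A B : Fml} {s : Finset ℕ}
    (hA : A.fvars ⊆ s) (hB : B.fvars ⊆ s) : (circ xhat A B).fvars ⊆ s := by
  have h1 := (fvars_hat_subset hx A).trans hA
  have h2 := (fvars_hat_subset hx B).trans hB
  simp only [circ, Fml.fvars]
  exact Finset.union_subset
    (Finset.union_subset (Finset.union_subset h2 h2) h2)
    (Finset.union_subset h1 (Finset.union_subset (Finset.union_subset h2 h2) h2))

private lemma fvars_toFml (hx : xhat.fvars = {0}) {m : ℕ} (t : ATree m) :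
    (t.toFml xhat).fvars ⊆ {0} := by
  induction t with
  | leaf a =>
      rw [show (ATree.leaf a).toFml xhat = circ xhat (Cform (a.val + 1)) (.var 0) from rfl]
      exact fvars_circ_subset hx (fvars_cform _) (by simp [Fml.fvars])
  | node l r ihl ihr =>
      rw [show (ATree.node l r).toFml xhat = dot xhat (l.toFml xhat) (r.toFml xhat) from rfl,
        dot_eq_circ]
      refine fvars_circ_subset hx ?_ ihr
      simp only [Fml.fvars]
      exact Finset.union_subset (Finset.union_subset ihl ihl) ihl

private lemma subst_toFml_congr (hx : xhat.fvars = {0}) {m : ℕ} {t : ATree m}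
    {σ σ' : ℕ → Fml} (h0 : σ 0 = σ' 0) :
    Fml.subst σ (t.toFml xhat) = Fml.subst σ' (t.toFml xhat) := by
  apply subst_congr
  intro n hn
  have := fvars_toFml hx t hn
  simp at this
  subst this
  exact h0

private lemma pt_inst_shape (hx : xhat.fvars = {0}) {m : ℕ} {T : TagSystem m} {G : Fml}
    (hG : G ∈ PT xhat T) (τ : ℕ → Fml) :
    ∃ U V D, Fml.subst τ G = .imp (circ xhat U V) D := by
  rcases hG with hT | hR
  · obtain ⟨i, α, A, B, hlen, hA, hB, hF | hF⟩ := hT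
    · subst hF
      exact imp_dot_shape hx τ A Xv _
    · subst hF
      obtain ⟨tA, hwA, hfA⟩ := hA
      obtain ⟨U, V, hc⟩ := toFml_is_circ hx tA τ
      refine ⟨U, V, Fml.subst τ B, ?_⟩
      show Fml.imp (Fml.subst τ A) (Fml.subst τ B) = _
      rw [← hfA, hc]
  · simp only [Raxioms, Set.mem_insert_iff, Set.mem_singleton_iff] at hR
    rcases hR with rfl | rfl | rfl | rfl <;> exact imp_dot_shape hx τ _ _ _

private lemma dot_not_ptinst (hx : xhat.fvars = {0}) {m : ℕ} {T : TagSystem m}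
    (U V : Fml) {G : Fml} {τ : ℕ → Fml} (hG : G ∈ PT xhat T) :
    Fml.subst τ G ≠ dot xhat U V := by
  intro h
  obtain ⟨U', V', D, hsh⟩ := pt_inst_shape hx hG τ
  rw [h, dot_eq_circ] at hsh
  have h1 := circ_decomp hsh
  exact circ_ne_dupl U' V' (hat xhat V) h1

private lemma toFml_not_ptinst (hx : xhat.fvars = {0}) {m : ℕ} {T : TagSystem m}
    (t : ATree m) (σ : ℕ → Fml) {G : Fml} {τ : ℕ → Fml} (hG : G ∈ PT xhat T) :
    Fml.subst τ G ≠ Fml.subst σ (t.toFml xhat) := by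
  intro h
  obtain ⟨U, V, hc⟩ := toFml_is_circ hx t σ
  obtain ⟨U', V', D, hsh⟩ := pt_inst_shape hx hG τ
  rw [h, hc] at hsh
  have h1 := circ_decomp hsh
  exact circ_ne_dupl U' V' (hat xhat V) h1

/-- The invariant set: instances of `P_T` axioms together with instances of
alphabetic formulas whose word is reachable from `ξ`. -/
private def MSet (xhat : Fml) {m : ℕ} (T : TagSystem m) (ξ : List (Fin m)) : Set Fml :=
  { F | (∃ G ∈ PT xhat T, ∃ τ, Fml.subst τ G = F) ∨
        (∃ (t : ATree m) (σ : ℕ → Fml),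
          Fml.subst σ (t.toFml xhat) = F ∧ TagProd T ξ t.word) }

private lemma dupl_not_mem (hx : xhat.fvars = {0}) {m : ℕ} {T : TagSystem m}
    {ξ : List (Fin m)} (C : Fml) : (.imp (.imp C C) C : Fml) ∉ MSet xhat T ξ := by
  rintro (⟨G, hG, τ, hτ⟩ | ⟨t, σ, hσ, -⟩)
  · obtain ⟨U, V, D, hsh⟩ := pt_inst_shape hx hG τ
    rw [hτ] at hsh
    injection hsh with h1 h2
    exact circ_ne_selfimp U V C h1.symm
  · obtain ⟨U, V, hc⟩ := toFml_is_circ hx t σ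
    exact circ_ne_dupl U V C (hc.symm.trans hσ)

private lemma deriv_mem (hx : xhat.fvars = {0}) {m : ℕ} {T : TagSystem m}
    {ξ : List (Fin m)} {F : Fml}
    (h : Fml.Deriv (PT xhat T ∪ codeSet xhat ξ) F) : F ∈ MSet xhat T ξ := by
  induction h with
  | @ax A hA =>
      rcases hA with hA | hA
      · exact Or.inl ⟨A, hA, Fml.var, subst_var_id A⟩
      · obtain ⟨t, hw, hfml⟩ := hA
        exact Or.inr ⟨t, Fml.var, by rw [subst_var_id]; exact hfml,
          by rw [hw]; exact Relation.ReflTransGen.refl⟩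
  | @sub A σ _ ih =>
      rcases ih with ⟨G, hG, τ, hτ⟩ | ⟨t, τ, hτ, hprod⟩
      · exact Or.inl ⟨G, hG, fun n => Fml.subst σ (τ n),
          by rw [← hτ]; exact (subst_subst σ τ G).symm⟩
      · exact Or.inr ⟨t, fun n => Fml.subst σ (τ n),
          by rw [← hτ]; exact (subst_subst σ τ _).symm, hprod⟩
  | @mp X Y hX hXY ihX ihXY =>
      rcases ihXY with ⟨G, hG, τ, hτ⟩ | ⟨t, σ, hσ, hprod⟩
      · -- `X → Y` is an instance of an axiom of `P_T`
        rcases hG with hT | hR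
        · obtain ⟨i, α, A, B, hlen, hA, hB, hF | hF⟩ := hT
          · -- (T₁)
            subst hF
            have hτ' : Fml.imp (dot xhat (Fml.subst τ A) (τ 1))
                (dot xhat (τ 1) (Fml.subst τ B)) = Fml.imp X Y := by
              rw [← hτ]
              show _ = Fml.imp (Fml.subst τ (dot xhat A Xv)) (Fml.subst τ (dot xhat Xv B))
              rw [subst_dot hx, subst_dot hx]
              rfl
            injection hτ' with hXeq hYeq
            rcases ihX with ⟨G', hG', τ', hτ'2⟩ | ⟨tX, σX, hσX, hprodX⟩
            · exact absurd (hτ'2.trans hXeq.symm) (dot_not_ptinst hx _ _ hG')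
            · obtain ⟨l, r, rfl, hl, hr⟩ :=
                dot_decomp hx tX σX _ _ (hσX.trans hXeq.symm)
              obtain ⟨tA, hwA, hfA⟩ := hA
              obtain ⟨tB, hwB, hfB⟩ := hB
              rw [← hfA] at hl
              obtain ⟨hwl, hp⟩ := word_det hx l tA σX τ hl
              have hcong : Fml.subst σX (tB.toFml xhat) = Fml.subst τ (tB.toFml xhat) :=
                subst_toFml_congr hx hp
              refine Or.inr ⟨.node r tB, σX, ?_, ?_⟩
              · rw [subst_toFml_node hx, hr, hcong, hfB]
                exact hYeq
              · refine hprodX.tail ⟨i, α, r.word, hlen, ?_, ?_⟩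
                · simp [ATree.word, hwl, hwA]
                · simp [ATree.word, hwB]
          · -- (T₂)
            subst hF
            have hτ' : Fml.imp (Fml.subst τ A) (Fml.subst τ B) = Fml.imp X Y := hτ
            injection hτ' with hXeq hYeq
            obtain ⟨tA, hwA, hfA⟩ := hA
            obtain ⟨tB, hwB, hfB⟩ := hB
            rcases ihX with ⟨G', hG', τ', hτ'2⟩ | ⟨tX, σX, hσX, hprodX⟩
            · have heq : Fml.subst τ' G' = Fml.subst τ (tA.toFml xhat) := by
                rw [hτ'2, ← hXeq, hfA]
              exact absurd heq (toFml_not_ptinst hx tA τ hG')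
            · have h' : Fml.subst σX (tX.toFml xhat) = Fml.subst τ (tA.toFml xhat) := by
                rw [hσX, ← hXeq, hfA]
              obtain ⟨hw, hp⟩ := word_det hx tX tA σX τ h'
              refine Or.inr ⟨tB, σX, ?_, ?_⟩
              · rw [subst_toFml_congr hx hp, hfB]
                exact hYeq
              · refine hprodX.tail ⟨i, α, [], hlen, ?_, ?_⟩
                · rw [hw, hwA]; simp
                · rw [hwB]; simp
        · -- (R₁)–(R₄)
          simp only [Raxioms, Set.mem_insert_iff, Set.mem_singleton_iff] at hR
          rcases ihX with ⟨G', hG', τ', hτ'2⟩ | ⟨tX, σX, hσX, hprodX⟩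
          · -- `X` cannot be an instance of an axiom, since it is a `dot`
            exfalso
            rcases hR with rfl | rfl | rfl | rfl <;>
            · have hτ' : Fml.imp (Fml.subst τ (dot xhat _ _)) (Fml.subst τ (dot xhat _ _))
                  = Fml.imp X Y := hτ
              injection hτ' with hXeq hYeq
              rw [subst_dot hx] at hXeq
              exact dot_not_ptinst hx _ _ hG' (hτ'2.trans hXeq.symm)
          · rcases hR with rfl | rfl | rfl | rfl
            · -- R₁ : x·(y·z) → (x·y)·z
              have hτ' : Fml.imp (dot xhat (τ 1) (dot xhat (τ 2) (τ 3)))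
                  (dot xhat (dot xhat (τ 1) (τ 2)) (τ 3)) = Fml.imp X Y := by
                rw [← hτ]
                show _ = Fml.imp (Fml.subst τ (dot xhat Xv (dot xhat Yv Zv)))
                  (Fml.subst τ (dot xhat (dot xhat Xv Yv) Zv))
                rw [subst_dot hx, subst_dot hx, subst_dot hx, subst_dot hx]
                rfl
              injection hτ' with hXeq hYeq
              obtain ⟨l, r, rfl, hl, hr⟩ :=
                dot_decomp hx tX σX _ _ (hσX.trans hXeq.symm)
              obtain ⟨rl, rr, rfl, hrl, hrr⟩ := dot_decomp hx r σX _ _ hr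
              refine Or.inr ⟨.node (.node l rl) rr, σX, ?_, ?_⟩
              · rw [subst_toFml_node hx, subst_toFml_node hx, hl, hrl, hrr]
                exact hYeq
              · have : (ATree.node (ATree.node l rl) rr).word
                    = (ATree.node l (ATree.node rl rr)).word := by
                  simp [ATree.word]
                rw [this]; exact hprodX
            · -- R₂ : (x·y)·z → x·(y·z)
              have hτ' : Fml.imp (dot xhat (dot xhat (τ 1) (τ 2)) (τ 3))
                  (dot xhat (τ 1) (dot xhat (τ 2) (τ 3))) = Fml.imp X Y := by
                rw [← hτ]
                show _ = Fml.imp (Fml.subst τ (dot xhat (dot xhat Xv Yv) Zv))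
                  (Fml.subst τ (dot xhat Xv (dot xhat Yv Zv)))
                rw [subst_dot hx, subst_dot hx, subst_dot hx, subst_dot hx]
                rfl
              injection hτ' with hXeq hYeq
              obtain ⟨l, r, rfl, hl, hr⟩ :=
                dot_decomp hx tX σX _ _ (hσX.trans hXeq.symm)
              obtain ⟨ll, lr, rfl, hll, hlr⟩ := dot_decomp hx l σX _ _ hl
              refine Or.inr ⟨.node ll (.node lr r), σX, ?_, ?_⟩
              · rw [subst_toFml_node hx, subst_toFml_node hx, hll, hlr, hr]
                exact hYeq
              · have : (ATree.node ll (ATree.node lr r)).word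
                    = (ATree.node (ATree.node ll lr) r).word := by
                  simp [ATree.word]
                rw [this]; exact hprodX
            · -- R₃ : (x·(y·z))·u → ((x·y)·z)·u
              have hτ' : Fml.imp (dot xhat (dot xhat (τ 1) (dot xhat (τ 2) (τ 3))) (τ 4))
                  (dot xhat (dot xhat (dot xhat (τ 1) (τ 2)) (τ 3)) (τ 4)) = Fml.imp X Y := by
                rw [← hτ]
                show _ = Fml.imp (Fml.subst τ (dot xhat (dot xhat Xv (dot xhat Yv Zv)) Uv))
                  (Fml.subst τ (dot xhat (dot xhat (dot xhat Xv Yv) Zv) Uv))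
                rw [subst_dot hx, subst_dot hx, subst_dot hx, subst_dot hx, subst_dot hx,
                  subst_dot hx]
                rfl
              injection hτ' with hXeq hYeq
              obtain ⟨l, r, rfl, hl, hr⟩ :=
                dot_decomp hx tX σX _ _ (hσX.trans hXeq.symm)
              obtain ⟨ll, lr, rfl, hll, hlr⟩ := dot_decomp hx l σX _ _ hl
              obtain ⟨c, d, rfl, hc, hd⟩ := dot_decomp hx lr σX _ _ hlr
              refine Or.inr ⟨.node (.node (.node ll c) d) r, σX, ?_, ?_⟩
              · rw [subst_toFml_node hx, subst_toFml_node hx, subst_toFml_node hx,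
                  hll, hc, hd, hr]
                exact hYeq
              · have : (ATree.node (ATree.node (ATree.node ll c) d) r).word
                    = (ATree.node (ATree.node ll (ATree.node c d)) r).word := by
                  simp [ATree.word]
                rw [this]; exact hprodX
            · -- R₄ : ((x·y)·z)·u → (x·(y·z))·u
              have hτ' : Fml.imp (dot xhat (dot xhat (dot xhat (τ 1) (τ 2)) (τ 3)) (τ 4))
                  (dot xhat (dot xhat (τ 1) (dot xhat (τ 2) (τ 3))) (τ 4)) = Fml.imp X Y := by
                rw [← hτ]
                show _ = Fml.imp (Fml.subst τ (dot xhat (dot xhat (dot xhat Xv Yv) Zv) Uv))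
                  (Fml.subst τ (dot xhat (dot xhat Xv (dot xhat Yv Zv)) Uv))
                rw [subst_dot hx, subst_dot hx, subst_dot hx, subst_dot hx, subst_dot hx,
                  subst_dot hx]
                rfl
              injection hτ' with hXeq hYeq
              obtain ⟨l, r, rfl, hl, hr⟩ :=
                dot_decomp hx tX σX _ _ (hσX.trans hXeq.symm)
              obtain ⟨ll, lr, rfl, hll, hlr⟩ := dot_decomp hx l σX _ _ hl
              obtain ⟨c, d, rfl, hc, hd⟩ := dot_decomp hx ll σX _ _ hll
              refine Or.inr ⟨.node (.node c (.node d lr)) r, σX, ?_, ?_⟩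
              · rw [subst_toFml_node hx, subst_toFml_node hx, subst_toFml_node hx,
                  hc, hd, hlr, hr]
                exact hYeq
              · have : (ATree.node (ATree.node c (ATree.node d lr)) r).word
                    = (ATree.node (ATree.node (ATree.node c d) lr) r).word := by
                  simp [ATree.word]
                rw [this]; exact hprodX
      · -- `X → Y` is an instance of an alphabetic formula: impossible, since then
        -- `X` would be of the form `(C → C) → C`, which is not in `MSet`
        obtain ⟨U, V, hc⟩ := toFml_is_circ hx t σ
        have hXeq := circ_decomp (hc.symm.trans hσ)
        rw [hXeq] at ihX
        exact absurd ihX (dupl_not_mem hx (hat xhat V))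

end Soundness

/-- For all nonempty words `ξ, ζ` over `𝒜`: if some element of
`͞ζ` is derivable from `P_T ∪ ͞ξ`, then `ξ ⟾_T ζ`. -/
theorem prod_of_deriv (xhat : Fml) (hx : xhat.fvars = {0})
    (m : ℕ) (T : TagSystem m) (hW : ∀ i, T.W i ≠ [])
    (ξ ζ : List (Fin m)) (hξ : ξ ≠ []) (hζ : ζ ≠ [])
    (h : ∃ B ∈ codeSet xhat ζ, Fml.Deriv (PT xhat T ∪ codeSet xhat ξ) B) :
    TagProd T ξ ζ := by
  obtain ⟨B, hB, hd⟩ := h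
  obtain ⟨t0, hw0, hf0⟩ := hB
  have hM := deriv_mem hx hd
  rcases hM with ⟨G, hG, τ, hτ⟩ | ⟨t, σ, hσ, hprod⟩
  · have heq : Fml.subst τ G = Fml.subst Fml.var (t0.toFml xhat) := by
      rw [hτ, ← hf0, subst_var_id]
    exact absurd heq (toFml_not_ptinst hx t0 Fml.var hG)
  · have h' : Fml.subst σ (t.toFml xhat) = Fml.subst Fml.var (t0.toFml xhat) := by
      rw [hσ, ← hf0, subst_var_id]
    obtain ⟨hw, -⟩ := word_det hx t t0 σ Fml.var h'
    rw [← hw0, ← hw]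
    exact hprod

end PC
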